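/- Set u₁ = v₂, u₂ = v₁ + v₂ + 2w₁, u₃ = v₁ + 2w₁ - w₂, u₄ = v₁ + w₁ - w₂ in ℚ⁶. Then u₁^T B_Q u₁ ∈ 2ℤ, u₂^T B_Q u₂ ∈ 2ℤ, u₃^T B_Q u₃ - 1/4 ∈ 2ℤ, u₄^T B_Q u₄ - 1/4 ∈ 2ℤ, u₁^T B_Q u₂ + 1/2 ∈ ℤ, and uᵢ^T B_Q uⱼ ∈ ℤ for all other pairs i ≠ j. (Thus, in the basis u₁,u₂,u₃,u₄ of the discriminant group, the discriminant quadratic form of NS(X) = U ⊕ E₈ ⊕ Q is represented by the matrix [[0,-1/2,0,0],[-1/2,0,0,0],[0,0,1/4,0],[0,0,0,1/4]], with diagonal entries taken modulo 2ℤ and off-diagonal entries modulo ℤ.) -/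

import Mathlib

open Matrix

/-- The Gram matrix `B_Q` (over `ℚ`) of the rank-6 lattice `Q` such that the Néron–Severi
lattice of a triple-double K3 surface with minimal Picard number is isometric to
`U ⊕ E₈ ⊕ Q`. -/
def B_Q : Matrix (Fin 6) (Fin 6) ℚ :=
  !![-2,  0,  1,   0,  2,  -1;
      0, -6, -1,  -4,  4,  -5;
      1, -1, -8,   6,  2,   0;
      0, -4,  6, -16,  4,  -2;
      2,  4,  2,   4, -8,   6;
     -1, -5,  0,  -2,  6, -12]

def v₁ : Fin 6 → ℚ := ![1/2, -1/2, 0, 0, 1/2, 0]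
def v₂ : Fin 6 → ℚ := ![-1/2, 1/2, 0, 0, 0, 0]
def w₁ : Fin 6 → ℚ := ![1/2, 0, 0, -1/4, 0, 0]
def w₂ : Fin 6 → ℚ := ![0, 0, 1/4, -1/4, -1/4, -1/4]

/-- The vectors `u₁ = v₂`, `u₂ = v₁ + v₂ + 2w₁`, `u₃ = v₁ + 2w₁ - w₂`,
`u₄ = v₁ + w₁ - w₂`. -/
def u : Fin 4 → (Fin 6 → ℚ) :=
  ![v₂, v₁ + v₂ + (2 : ℚ) • w₁, v₁ + (2 : ℚ) • w₁ - w₂, v₁ + w₁ - w₂]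

/-! The Gram matrix `(uᵢᵀ B_Q uⱼ)` is computed exactly: it is an integral matrix with even
diagonal plus the matrix of the discriminant form, and every congruence is read off from this
splitting. -/

def intGram : Matrix (Fin 4) (Fin 4) ℤ :=
  !![-2,  3,   4,  3;
      3, -8,  -8, -5;
      4, -8, -12, -9;
      3, -5,  -9, -8]

def discGram : Matrix (Fin 4) (Fin 4) ℚ :=
  !![   0, -1/2,   0,   0;
     -1/2,    0,   0,   0;
        0,    0, 1/4,   0;
        0,    0,   0, 1/4]

lemma u_dotProduct_B_Q_mulVec_u (i j : Fin 4) :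
    u i ⬝ᵥ (B_Q *ᵥ u j) = intGram i j + discGram i j := by
  fin_cases i <;> fin_cases j <;>
    norm_num [u, v₁, v₂, w₁, w₂, B_Q, intGram, discGram, mulVec, dotProduct, Fin.sum_univ_succ]

lemma discGram_eq_zero {i j : Fin 4} (hij : i ≠ j) (h01 : ¬(i = 0 ∧ j = 1))
    (h10 : ¬(i = 1 ∧ j = 0)) : discGram i j = 0 := by
  fin_cases i <;> fin_cases j <;> simp_all [discGram]

/-- In the basis `u₁, u₂, u₃, u₄` of the discriminant group, the discriminant quadratic
form of `NS(X) = U ⊕ E₈ ⊕ Q` is represented by the matrix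
`[[0,-1/2,0,0],[-1/2,0,0,0],[0,0,1/4,0],[0,0,0,1/4]]` (diagonal entries modulo `2ℤ`,
off-diagonal entries modulo `ℤ`). -/
theorem stmt_6 :
    (∃ k : ℤ, (u 0) ⬝ᵥ (B_Q *ᵥ u 0) = 2 * k) ∧
    (∃ k : ℤ, (u 1) ⬝ᵥ (B_Q *ᵥ u 1) = 2 * k) ∧
    (∃ k : ℤ, (u 2) ⬝ᵥ (B_Q *ᵥ u 2) - 1/4 = 2 * k) ∧
    (∃ k : ℤ, (u 3) ⬝ᵥ (B_Q *ᵥ u 3) - 1/4 = 2 * k) ∧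
    (∃ n : ℤ, (u 0) ⬝ᵥ (B_Q *ᵥ u 1) + 1/2 = n) ∧
    (∀ i j : Fin 4, i ≠ j → ¬(i = 0 ∧ j = 1) → ¬(i = 1 ∧ j = 0) →
      ∃ n : ℤ, (u i) ⬝ᵥ (B_Q *ᵥ u j) = n) := by
  simp only [u_dotProduct_B_Q_mulVec_u]
  refine ⟨⟨-1, ?_⟩, ⟨-4, ?_⟩, ⟨-6, ?_⟩, ⟨-4, ?_⟩, ⟨3, ?_⟩,
    fun i j hij h01 h10 => ⟨intGram i j, by rw [discGram_eq_zero hij h01 h10, add_zero]⟩⟩ <;>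
    norm_num [intGram, discGram, Matrix.cons_val_two, Matrix.cons_val_three]
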